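/- arXiv:1909.07303 — 7 statements merged into one kernel-verified Lean document; each statement's English description precedes it below -/
import Mathlib

section
/- For every natural number n ≥ 1 and every real (or complex) T with T ≠ ±1 and T^n ≠ 1, one has (1/n) · ∑_{k=0}^{n-1} 1/(1 - 2·cos(2kπ/n)·T + T²) = (1 - T^{2n}) / ((1 - T²)·(1 - T^n)²). -/
/-!
With `ζ = exp(2πi/n)` the denominator factors as `(1 - ζᵏT)(1 - ζ⁻ᵏT)`, and since
`ζᵏ · ζ⁻ᵏ = 1` its reciprocal splits into partial fractions:
`1/((1 - aT)(1 - a⁻¹T)) = (1/(1 - aT) + 1/(1 - a⁻¹T) - 1) / (1 - T²)`.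
Expanding `1/(1 - ζᵏT) = (∑_{m<n} ζ^{km} Tᵐ)/(1 - Tⁿ)` and using orthogonality of the
`n`-th roots of unity gives `∑_k 1/(1 - ζᵏT) = n/(1 - Tⁿ)`, and likewise for `ζ⁻¹`.
Hence the sum equals `n(1 + Tⁿ)/((1 - T²)(1 - Tⁿ))`.
-/

open Finset

theorem one_div_one_sub_mul_mul_one_sub_mul {K : Type*} [Field K] {a b t : K} (hab : a * b = 1)
    (ha : 1 - a * t ≠ 0) (hb : 1 - b * t ≠ 0) (ht : t ^ 2 ≠ 1) :
    1 / ((1 - a * t) * (1 - b * t)) = (1 / (1 - a * t) + 1 / (1 - b * t) - 1) / (1 - t ^ 2) := by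
  rw [eq_div_iff (sub_ne_zero.mpr ht.symm), div_add_div _ _ ha hb,
    div_sub_one (mul_ne_zero ha hb), div_mul_eq_mul_div, one_mul,
    div_left_inj' (mul_ne_zero ha hb)]
  linear_combination t ^ 2 * hab

namespace IsPrimitiveRoot

variable {K : Type*} [Field K] {ζ t : K} {n : ℕ}

theorem sum_range_pow_pow_eq_ite (hζ : IsPrimitiveRoot ζ n) {m : ℕ} (hm : m < n) :
    ∑ k ∈ range n, (ζ ^ m) ^ k = if m = 0 then (n : K) else 0 := by
  split_ifs with hm0
  · simp [hm0]
  · rw [geom_sum_eq (hζ.pow_ne_one_of_pos_of_lt hm0 hm), ← pow_mul, mul_comm, pow_mul,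
      hζ.pow_eq_one, one_pow, sub_self, zero_div]

theorem pow_mul_pow_eq_pow (hζ : IsPrimitiveRoot ζ n) (k : ℕ) (t : K) :
    (ζ ^ k * t) ^ n = t ^ n := by
  rw [mul_pow, ← pow_mul, mul_comm k n, pow_mul, hζ.pow_eq_one, one_pow, one_mul]

theorem one_sub_pow_mul_ne_zero (hζ : IsPrimitiveRoot ζ n) (ht : t ^ n ≠ 1) (k : ℕ) :
    1 - ζ ^ k * t ≠ 0 := by
  rw [sub_ne_zero]
  rintro hk
  exact ht (by rw [← hζ.pow_mul_pow_eq_pow k, ← hk, one_pow])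

theorem sum_one_div_one_sub_pow_mul (hζ : IsPrimitiveRoot ζ n) (ht : t ^ n ≠ 1) :
    ∑ k ∈ range n, 1 / (1 - ζ ^ k * t) = n / (1 - t ^ n) := by
  have htn : 1 - t ^ n ≠ 0 := sub_ne_zero.mpr ht.symm
  have hgeom (k : ℕ) :
      1 / (1 - ζ ^ k * t) = (∑ m ∈ range n, (ζ ^ k * t) ^ m) / (1 - t ^ n) := by
    rw [div_eq_div_iff (hζ.one_sub_pow_mul_ne_zero ht k) htn, one_mul, mul_comm,
      mul_neg_geom_sum, hζ.pow_mul_pow_eq_pow]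
  have horth : ∑ k ∈ range n, ∑ m ∈ range n, (ζ ^ k * t) ^ m = n := by
    have hn : 0 < n := Nat.pos_of_ne_zero (by rintro rfl; exact ht (pow_zero t))
    calc ∑ k ∈ range n, ∑ m ∈ range n, (ζ ^ k * t) ^ m
        = ∑ m ∈ range n, t ^ m * ∑ k ∈ range n, (ζ ^ m) ^ k := by
          rw [sum_comm]
          refine sum_congr rfl fun m _ => ?_
          rw [mul_sum]
          exact sum_congr rfl fun k _ => by
            rw [mul_pow, ← pow_mul, ← pow_mul, mul_comm k, mul_comm]
      _ = ∑ m ∈ range n, t ^ m * if m = 0 then (n : K) else 0 :=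
          sum_congr rfl fun m hm => by rw [hζ.sum_range_pow_pow_eq_ite (mem_range.mp hm)]
      _ = n := by simp [mul_ite, hn]
  rw [sum_congr rfl fun k _ => hgeom k, ← sum_div, horth]

theorem sum_one_div_one_sub_pow_mul_mul_one_sub_inv_pow_mul (hζ : IsPrimitiveRoot ζ n)
    (ht : t ^ n ≠ 1) (ht2 : t ^ 2 ≠ 1) :
    ∑ k ∈ range n, 1 / ((1 - ζ ^ k * t) * (1 - (ζ ^ k)⁻¹ * t)) =
      n * (1 + t ^ n) / ((1 - t ^ 2) * (1 - t ^ n)) := by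
  have hn : n ≠ 0 := by rintro rfl; exact ht (pow_zero t)
  have hζk (k : ℕ) : ζ ^ k * ζ⁻¹ ^ k = 1 := by
    rw [← mul_pow, mul_inv_cancel₀ (hζ.ne_zero hn), one_pow]
  have hsplit (k : ℕ) : 1 / ((1 - ζ ^ k * t) * (1 - (ζ ^ k)⁻¹ * t)) =
      (1 / (1 - ζ ^ k * t) + 1 / (1 - ζ⁻¹ ^ k * t) - 1) / (1 - t ^ 2) := by
    rw [← inv_pow]
    exact one_div_one_sub_mul_mul_one_sub_mul (hζk k) (hζ.one_sub_pow_mul_ne_zero ht k)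
      (hζ.inv.one_sub_pow_mul_ne_zero ht k) ht2
  rw [sum_congr rfl fun k _ => hsplit k, ← sum_div, sum_sub_distrib, sum_add_distrib,
    hζ.sum_one_div_one_sub_pow_mul ht, hζ.inv.sum_one_div_one_sub_pow_mul ht, sum_const,
    card_range, nsmul_one]
  have htn : 1 - t ^ n ≠ 0 := sub_ne_zero.mpr ht.symm
  have ht2' : 1 - t ^ 2 ≠ 0 := sub_ne_zero.mpr ht2.symm
  field_simp
  ring

end IsPrimitiveRoot

theorem Complex.one_sub_two_mul_cos_mul_add_sq (θ t : ℂ) :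
    1 - 2 * cos θ * t + t ^ 2 = (1 - exp (θ * I) * t) * (1 - (exp (θ * I))⁻¹ * t) := by
  rw [two_cos, neg_mul, exp_neg]
  field_simp
  ring

theorem stmt0_general (n : ℕ) (T : ℝ) (hT2 : T ≠ -1)
    (hTn : T ^ n ≠ 1) :
    (1 / (n : ℝ)) * ∑ k ∈ Finset.range n,
        1 / (1 - 2 * Real.cos (2 * (k : ℝ) * Real.pi / (n : ℝ)) * T + T ^ 2) =
      (1 - T ^ (2 * n)) / ((1 - T ^ 2) * (1 - T ^ n) ^ 2) := by
  have hn : n ≠ 0 := by rintro rfl; exact hTn (pow_zero T)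
  have hT1 : T ≠ 1 := by rintro rfl; exact hTn (one_pow n)
  have hTn' : (T : ℂ) ^ n ≠ 1 := by exact_mod_cast hTn
  have hT2' : (T : ℂ) ^ 2 ≠ 1 := by exact_mod_cast sq_ne_one_iff.mpr ⟨hT1, hT2⟩
  set ζ := Complex.exp (2 * Real.pi * Complex.I / n)
  have hfactor (k : ℕ) : 1 - 2 * Complex.cos (2 * k * Real.pi / n) * T + (T : ℂ) ^ 2 =
      (1 - ζ ^ k * T) * (1 - (ζ ^ k)⁻¹ * T) := by
    rw [Complex.one_sub_two_mul_cos_mul_add_sq, ← Complex.exp_nat_mul]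
    ring_nf
  rw [← Complex.ofReal_inj]
  push_cast
  simp only [hfactor]
  rw [(Complex.isPrimitiveRoot_exp n hn).sum_one_div_one_sub_pow_mul_mul_one_sub_inv_pow_mul
    hTn' hT2']
  have hTn'' : (1 : ℂ) - (T : ℂ) ^ n ≠ 0 := sub_ne_zero.mpr hTn'.symm
  field_simp
  ring

theorem stmt0 (n : ℕ) (hn : 1 ≤ n) (T : ℝ) (hT1 : T ≠ 1) (hT2 : T ≠ -1)
    (hTn : T ^ n ≠ 1) :
    (1 / (n : ℝ)) * ∑ k ∈ Finset.range n,
        1 / (1 - 2 * Real.cos (2 * (k : ℝ) * Real.pi / (n : ℝ)) * T + T ^ 2) =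
      (1 - T ^ (2 * n)) / ((1 - T ^ 2) * (1 - T ^ n) ^ 2) :=
  stmt0_general n T hT2 hTn
end

section
/- For every natural number n ≥ 1 and all complex numbers T, y with T ≠ ±1 and T^n ≠ 1, one has (1/n) · ∑_{k=0}^{n-1} (1 - 2·cos(2kπ/n)·y·T + y²T²)/(1 - 2·cos(2kπ/n)·T + T²) = (1 - y)(1 - y·T²)·(1 - T^{2n})/((1 - T²)(1 - T^n)²) + y. -/
open Finset

private lemma root_ne_aux (n : ℕ) (z T : ℂ) (hz : z ^ n = 1) (hT : T ^ n ≠ 1) :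
    1 - z * T ≠ 0 := by
  intro h
  apply hT
  have hzT : z * T = 1 := by linear_combination -h
  have : (z * T) ^ n = 1 := by rw [hzT, one_pow]
  rwa [mul_pow, hz, one_mul] at this

private lemma sumA (n : ℕ) (hn : 0 < n) (z T : ℂ) (hz : IsPrimitiveRoot z n)
    (hT : T ^ n ≠ 1) :
    ∑ k ∈ Finset.range n, 1 / (1 - z ^ k * T) = (n : ℂ) / (1 - T ^ n) := by
  have hTn : (1 : ℂ) - T ^ n ≠ 0 := sub_ne_zero.mpr (Ne.symm hT)
  have hzk : ∀ k : ℕ, (z ^ k) ^ n = 1 := by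
    intro k
    rw [← pow_mul, mul_comm, pow_mul, hz.pow_eq_one, one_pow]
  have hkey : ∀ k ∈ Finset.range n, 1 / (1 - z ^ k * T) =
      (∑ m ∈ Finset.range n, (z ^ k * T) ^ m) / (1 - T ^ n) := by
    intro k _
    have hne : 1 - z ^ k * T ≠ 0 := root_ne_aux n _ T (hzk k) hT
    rw [div_eq_div_iff hne hTn]
    have h := geom_sum_mul (z ^ k * T) n
    have hxn : (z ^ k * T) ^ n = T ^ n := by rw [mul_pow, hzk, one_mul]
    linear_combination h + hxn
  rw [Finset.sum_congr rfl hkey, ← Finset.sum_div]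
  congr 1
  calc ∑ k ∈ Finset.range n, ∑ m ∈ Finset.range n, (z ^ k * T) ^ m
      = ∑ m ∈ Finset.range n, (∑ k ∈ Finset.range n, (z ^ m) ^ k) * T ^ m := by
        rw [Finset.sum_comm]
        refine Finset.sum_congr rfl fun m _ => ?_
        rw [Finset.sum_mul]
        refine Finset.sum_congr rfl fun k _ => ?_
        rw [mul_pow, ← pow_mul, ← pow_mul, mul_comm k m]
    _ = (n : ℂ) := by
        rw [Finset.sum_eq_single 0]
        · simp
        · intro m hm hm0
          have hlt : m < n := Finset.mem_range.mp hm
          have hne1 : z ^ m ≠ 1 :=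
            hz.pow_ne_one_of_pos_of_lt hm0 hlt
          rw [geom_sum_eq hne1]
          have : (z ^ m) ^ n = 1 := by
            rw [← pow_mul, mul_comm, pow_mul, hz.pow_eq_one, one_pow]
          rw [this]
          simp
        · intro h
          exact absurd (Finset.mem_range.mpr hn) h

private lemma term_eq (u T y : ℂ) (hu : u ≠ 0) (h1 : 1 - u * T ≠ 0)
    (h2 : 1 - u⁻¹ * T ≠ 0) (hT2 : 1 - T ^ 2 ≠ 0) :
    (1 - (u + u⁻¹) * y * T + y ^ 2 * T ^ 2) / (1 - (u + u⁻¹) * T + T ^ 2) =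
      (y - (y - 1) * (y * T ^ 2 - 1) / (1 - T ^ 2)) +
        ((y - 1) * (y * T ^ 2 - 1) / (1 - T ^ 2)) * (1 / (1 - u⁻¹ * T)) +
        ((y - 1) * (y * T ^ 2 - 1) / (1 - T ^ 2)) * (1 / (1 - u * T)) := by
  have hv : 1 - u⁻¹ * T = (u - T) / u := by field_simp
  have huT : u - T ≠ 0 := by
    intro h
    apply h2
    rw [hv, h, zero_div]
  have hnum : 1 - (u + u⁻¹) * y * T + y ^ 2 * T ^ 2
      = (1 - u * y * T) * (u - y * T) / u := by field_simp; ring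
  have hden : 1 - (u + u⁻¹) * T + T ^ 2 = (1 - u * T) * (u - T) / u := by
    field_simp; ring
  rw [hv, hnum, hden]
  field_simp
  ring

theorem stmt1 (n : ℕ) (hn : 1 ≤ n) (T y : ℂ) (hT1 : T ≠ 1) (hT2 : T ≠ -1)
    (hTn : T ^ n ≠ 1) :
    (1 / (n : ℂ)) * ∑ k ∈ Finset.range n,
        (1 - 2 * (Real.cos (2 * (k : ℝ) * Real.pi / (n : ℝ)) : ℂ) * y * T + y ^ 2 * T ^ 2) /
          (1 - 2 * (Real.cos (2 * (k : ℝ) * Real.pi / (n : ℝ)) : ℂ) * T + T ^ 2) =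
      (1 - y) * (1 - y * T ^ 2) * (1 - T ^ (2 * n)) / ((1 - T ^ 2) * (1 - T ^ n) ^ 2) + y := by
  have hn0 : (n : ℂ) ≠ 0 := Nat.cast_ne_zero.mpr (by omega)
  have hT2' : (1 : ℂ) - T ^ 2 ≠ 0 := by
    intro h
    have : (1 - T) * (1 + T) = 0 := by linear_combination h
    rcases mul_eq_zero.mp this with h' | h'
    · exact hT1 (by linear_combination -h')
    · exact hT2 (by linear_combination h')
  have hTn' : (1 : ℂ) - T ^ n ≠ 0 := sub_ne_zero.mpr (Ne.symm hTn)
  set ζ : ℂ := Complex.exp (2 * Real.pi * Complex.I / n) with hζdef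
  have hζ : IsPrimitiveRoot ζ n := Complex.isPrimitiveRoot_exp n (by omega)
  have hζinv : IsPrimitiveRoot ζ⁻¹ n := hζ.inv
  have hζ0 : ζ ≠ 0 := Complex.exp_ne_zero _
  have hpow : ∀ k : ℕ, (ζ ^ k) ^ n = 1 := by
    intro k
    rw [← pow_mul, mul_comm, pow_mul, hζ.pow_eq_one, one_pow]
  have hcos : ∀ k : ℕ, 2 * ((Real.cos (2 * (k : ℝ) * Real.pi / (n : ℝ)) : ℝ) : ℂ)
      = ζ ^ k + (ζ ^ k)⁻¹ := by
    intro k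
    rw [Complex.ofReal_cos]
    have harg : ((2 * (k : ℝ) * Real.pi / (n : ℝ) : ℝ) : ℂ) * Complex.I
        = (k : ℂ) * (2 * Real.pi * Complex.I / n) := by
      push_cast
      field_simp
    rw [Complex.cos, neg_mul, Complex.exp_neg, harg, Complex.exp_nat_mul]
    ring
  have hne1 : ∀ k : ℕ, 1 - ζ ^ k * T ≠ 0 := fun k =>
    root_ne_aux n _ T (hpow k) hTn
  have hne2 : ∀ k : ℕ, 1 - (ζ ^ k)⁻¹ * T ≠ 0 := fun k =>
    root_ne_aux n _ T (by rw [inv_pow, hpow k, inv_one]) hTn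
  set C : ℂ := (y - 1) * (y * T ^ 2 - 1) / (1 - T ^ 2) with hCdef
  have hterm : ∀ k ∈ Finset.range n,
      (1 - 2 * (Real.cos (2 * (k : ℝ) * Real.pi / (n : ℝ)) : ℂ) * y * T + y ^ 2 * T ^ 2) /
          (1 - 2 * (Real.cos (2 * (k : ℝ) * Real.pi / (n : ℝ)) : ℂ) * T + T ^ 2)
      = (y - C) + C * (1 / (1 - ζ⁻¹ ^ k * T)) + C * (1 / (1 - ζ ^ k * T)) := by
    intro k _
    have h2c : 2 * ((Real.cos (2 * (k : ℝ) * Real.pi / (n : ℝ)) : ℝ) : ℂ)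
        = ζ ^ k + (ζ ^ k)⁻¹ := hcos k
    rw [show (2 : ℂ) * ((Real.cos (2 * (k : ℝ) * Real.pi / (n : ℝ)) : ℝ) : ℂ) * y * T
        = (ζ ^ k + (ζ ^ k)⁻¹) * y * T by rw [h2c],
      show (2 : ℂ) * ((Real.cos (2 * (k : ℝ) * Real.pi / (n : ℝ)) : ℝ) : ℂ) * T
        = (ζ ^ k + (ζ ^ k)⁻¹) * T by rw [h2c]]
    rw [inv_pow]
    exact term_eq (ζ ^ k) T y (pow_ne_zero _ hζ0) (hne1 k) (hne2 k) hT2'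
  rw [Finset.sum_congr rfl hterm]
  rw [Finset.sum_add_distrib, Finset.sum_add_distrib, ← Finset.mul_sum, ← Finset.mul_sum,
    sumA n (by omega) ζ T hζ hTn, sumA n (by omega) ζ⁻¹ T hζinv hTn,
    Finset.sum_const, Finset.card_range]
  have h2n : T ^ (2 * n) = (T ^ n) ^ 2 := by rw [mul_comm, pow_mul]
  rw [h2n, hCdef]
  obtain ⟨S, hS⟩ : ∃ S : ℂ, T ^ n = S := ⟨_, rfl⟩
  rw [hS] at hTn' ⊢
  rw [nsmul_eq_mul]
  field_simp
  ring
end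

section
/- Let n ≥ 1 and let ζ = exp(2πi/n) be a primitive n-th root of unity. For complex numbers t₁, t₂, y with t₁, t₂ ≠ 0 such that t₁^n ≠ 1, t₂^n ≠ 1 and (t₁t₂)^n ≠ 1, one has (1/n)·∑_{k=0}^{n-1} (1 - yζ^k/t₁)(1 - yζ^{-k}/t₂)/((1 - ζ^k/t₁)(1 - ζ^{-k}/t₂)) = (1-y)(1 - y/(t₁t₂))·(1 - (t₁t₂)^{-n})/((1 - (t₁t₂)^{-1})(1 - t₁^{-n})(1 - t₂^{-n})) + y. -/
open Finset

private lemma sum_inv_sub_root {n : ℕ} (hn : n ≠ 0) {ζ : ℂ} (hζ : IsPrimitiveRoot ζ n)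
    {w : ℂ} (hw : w ^ n ≠ 1) :
    ∑ k ∈ Finset.range n, (w - ζ ^ k)⁻¹ = n * w ^ (n - 1) / (w ^ n - 1) := by
  have hpow : ∀ k : ℕ, (ζ ^ k) ^ n = 1 := by
    intro k
    rw [← pow_mul, mul_comm, pow_mul, hζ.pow_eq_one, one_pow]
  have hwn : w ^ n - 1 ≠ 0 := sub_ne_zero.mpr hw
  have hterm : ∀ k ∈ Finset.range n,
      (w - ζ ^ k)⁻¹ = (∑ i ∈ Finset.range n, w ^ i * (ζ ^ k) ^ (n - 1 - i)) / (w ^ n - 1) := by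
    intro k _
    have hne : w - ζ ^ k ≠ 0 := by
      intro h
      rw [sub_eq_zero] at h
      exact hw (by rw [h, hpow])
    have hgs : (∑ i ∈ Finset.range n, w ^ i * (ζ ^ k) ^ (n - 1 - i)) * (w - ζ ^ k)
        = w ^ n - 1 := by
      rw [geom_sum₂_mul, hpow]
    field_simp
    linear_combination -hgs
  rw [Finset.sum_congr rfl hterm, ← Finset.sum_div]
  congr 1
  rw [Finset.sum_comm]
  have hinner : ∀ i ∈ Finset.range n,
      (∑ k ∈ Finset.range n, w ^ i * (ζ ^ k) ^ (n - 1 - i))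
        = if i = n - 1 then (n : ℂ) * w ^ (n - 1) else 0 := by
    intro i hi
    rw [Finset.mem_range] at hi
    by_cases h : i = n - 1
    · subst h
      simp [Nat.sub_self, Finset.sum_const, mul_comm]
    · have hm : 0 < n - 1 - i ∧ n - 1 - i < n := by omega
      have hz1 : ζ ^ (n - 1 - i) ≠ 1 := hζ.pow_ne_one_of_pos_of_lt hm.1.ne' hm.2
      have : ∑ k ∈ Finset.range n, (ζ ^ k) ^ (n - 1 - i) = 0 := by
        have := geom_sum_eq hz1 n
        simp_rw [← pow_mul, mul_comm, pow_mul] at this ⊢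
        rw [this, hζ.pow_eq_one, one_pow, sub_self, zero_div]
      rw [← Finset.mul_sum, this, mul_zero, if_neg h]
  rw [Finset.sum_congr rfl hinner, Finset.sum_ite_eq' (Finset.range n) (n-1)]
  rw [if_pos (Finset.mem_range.mpr (by omega))]

set_option maxHeartbeats 1000000 in
theorem stmt2 (n : ℕ) (hn : 1 ≤ n) (t₁ t₂ y : ℂ) (ht₁0 : t₁ ≠ 0) (ht₂0 : t₂ ≠ 0)
    (ht₁ : t₁ ^ n ≠ 1) (ht₂ : t₂ ^ n ≠ 1) (ht₁₂ : (t₁ * t₂) ^ n ≠ 1)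
    (ζ : ℂ) (hζ : ζ = Complex.exp (2 * Real.pi * Complex.I / (n : ℂ))) :
    (1 / (n : ℂ)) * ∑ k ∈ Finset.range n,
        ((1 - y * ζ ^ k / t₁) * (1 - y * ζ ^ (-(k : ℤ)) / t₂)) /
          ((1 - ζ ^ k / t₁) * (1 - ζ ^ (-(k : ℤ)) / t₂)) =
      (1 - y) * (1 - y / (t₁ * t₂)) * (1 - (t₁ * t₂) ^ (-(n : ℤ))) /
          ((1 - (t₁ * t₂)⁻¹) * (1 - t₁ ^ (-(n : ℤ))) * (1 - t₂ ^ (-(n : ℤ)))) + y := by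
  obtain ⟨m, rfl⟩ : ∃ m, n = m + 1 := ⟨n - 1, by omega⟩
  set n := m + 1 with hndef
  have hn0 : n ≠ 0 := by omega
  have hprim : IsPrimitiveRoot ζ n := by
    rw [hζ]; exact Complex.isPrimitiveRoot_exp n hn0
  have hζ0 : ζ ≠ 0 := hprim.ne_zero hn0
  have hnC : (n : ℂ) ≠ 0 := Nat.cast_ne_zero.mpr hn0
  have hpow : ∀ k : ℕ, (ζ ^ k) ^ n = 1 := by
    intro k
    rw [← pow_mul, mul_comm, pow_mul, hprim.pow_eq_one, one_pow]
  have hp1 : t₁ * t₂ - 1 ≠ 0 := by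
    intro h
    rw [sub_eq_zero] at h
    exact ht₁₂ (by rw [h, one_pow])
  set B : ℂ := t₁ * (1 - y) * (t₁ * t₂ - y) / (t₁ * t₂ - 1) with hB
  set C : ℂ := (1 - y) * (t₁ * t₂ - y) / (t₁ * t₂ - 1) with hC
  have hterm : ∀ k ∈ Finset.range n,
      ((1 - y * ζ ^ k / t₁) * (1 - y * ζ ^ (-(k : ℤ)) / t₂)) /
          ((1 - ζ ^ k / t₁) * (1 - ζ ^ (-(k : ℤ)) / t₂))
        = y + B * (t₁ - ζ ^ k)⁻¹ + C * (ζ ^ k * t₂ - 1)⁻¹ := by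
    intro k _
    have hzneg : ζ ^ (-(k : ℤ)) = (ζ ^ k)⁻¹ := by
      rw [zpow_neg, zpow_natCast]
    have hz0 : ζ ^ k ≠ 0 := pow_ne_zero _ hζ0
    have h1 : t₁ - ζ ^ k ≠ 0 := by
      intro h; rw [sub_eq_zero] at h; exact ht₁ (by rw [h, hpow])
    have h2 : ζ ^ k * t₂ - 1 ≠ 0 := by
      intro h
      rw [sub_eq_zero] at h
      apply ht₂
      have : (ζ ^ k * t₂) ^ n = 1 := by rw [h, one_pow]
      rwa [mul_pow, hpow, one_mul] at this
    have hd1 : 1 - ζ ^ k / t₁ ≠ 0 := by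
      rw [sub_ne_zero]
      intro h
      apply h1
      field_simp at h
      rw [h]; ring
    have hd2 : 1 - (ζ ^ k)⁻¹ / t₂ ≠ 0 := by
      rw [sub_ne_zero]
      intro h
      apply h2
      field_simp at h
      linear_combination h
    rw [hzneg, hB, hC]
    field_simp
    ring
  rw [Finset.sum_congr rfl hterm]
  simp_rw [add_assoc]
  rw [Finset.sum_add_distrib, Finset.sum_add_distrib, ← Finset.mul_sum, ← Finset.mul_sum,
    Finset.sum_const, Finset.card_range, nsmul_eq_mul]
  have hS1 : ∑ k ∈ Finset.range n, (t₁ - ζ ^ k)⁻¹ = n * t₁ ^ m / (t₁ ^ n - 1) := by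
    have := sum_inv_sub_root hn0 hprim ht₁
    rwa [show n - 1 = m from rfl] at this
  have hS2 : ∑ k ∈ Finset.range n, (ζ ^ k * t₂ - 1)⁻¹ = n / (t₂ ^ n - 1) := by
    have ht₂inv : t₂⁻¹ ^ n ≠ 1 := by
      rw [inv_pow]
      intro h
      exact ht₂ (by rw [← inv_inv (t₂ ^ n), h, inv_one])
    have hsum := sum_inv_sub_root hn0 hprim ht₂inv
    have hterm2 : ∀ k ∈ Finset.range n, (ζ ^ k * t₂ - 1)⁻¹ = (-t₂⁻¹) * (t₂⁻¹ - ζ ^ k)⁻¹ := by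
      intro k _
      have hz0 : ζ ^ k ≠ 0 := pow_ne_zero _ hζ0
      have h2 : ζ ^ k * t₂ - 1 ≠ 0 := by
        intro h
        rw [sub_eq_zero] at h
        apply ht₂
        have : (ζ ^ k * t₂) ^ n = 1 := by rw [h, one_pow]
        rwa [mul_pow, hpow, one_mul] at this
      have e : ζ ^ k * t₂ - 1 = -(t₂ * (t₂⁻¹ - ζ ^ k)) := by
        rw [mul_sub, mul_inv_cancel₀ ht₂0]; ring
      rw [e, inv_neg, mul_inv]
      ring
    rw [Finset.sum_congr rfl hterm2, ← Finset.mul_sum, hsum]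
    have htn : t₂ ^ n - 1 ≠ 0 := sub_ne_zero.mpr ht₂
    rw [show n - 1 = m from rfl, inv_pow, inv_pow, show (n : ℕ) = m + 1 from rfl, pow_succ]
    rw [show (t₂ ^ (m+1) : ℂ) = t₂ ^ m * t₂ from pow_succ t₂ m] at htn
    have hA0 : (t₂ : ℂ) ^ m ≠ 0 := pow_ne_zero _ ht₂0
    have hmt0 : (t₂ : ℂ) ^ m * t₂ ≠ 0 := mul_ne_zero hA0 ht₂0
    have key : ((t₂ ^ m * t₂ : ℂ))⁻¹ - 1 = -(t₂ ^ m * t₂ - 1) / (t₂ ^ m * t₂) := by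
      field_simp
      ring
    rw [key, div_div_eq_mul_div, eq_div_iff htn]
    simp only [div_neg, mul_neg, neg_mul, neg_neg]
    rw [mul_assoc, div_mul_cancel₀ _ htn]
    field_simp
  rw [hS1, hS2, hB, hC]
  have ha1 : t₁ ^ m * t₁ - 1 ≠ 0 := by
    rw [← pow_succ]; exact sub_ne_zero.mpr ht₁
  have hb1 : t₂ ^ m * t₂ - 1 ≠ 0 := by
    rw [← pow_succ]; exact sub_ne_zero.mpr ht₂
  have hab1 : t₁ ^ m * t₁ * (t₂ ^ m * t₂) - 1 ≠ 0 := by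
    intro h
    apply ht₁₂
    rw [mul_pow, pow_succ, pow_succ, sub_eq_zero] at *
    exact h ▸ rfl
  have hzp1 : (t₁ * t₂ : ℂ) ^ (-((n : ℕ) : ℤ)) = (t₁ ^ m * t₁ * (t₂ ^ m * t₂))⁻¹ := by
    rw [zpow_neg, zpow_natCast, mul_pow, pow_succ, pow_succ]
  have hzp2 : (t₁ : ℂ) ^ (-((n : ℕ) : ℤ)) = (t₁ ^ m * t₁)⁻¹ := by
    rw [zpow_neg, zpow_natCast, pow_succ]
  have hzp3 : (t₂ : ℂ) ^ (-((n : ℕ) : ℤ)) = (t₂ ^ m * t₂)⁻¹ := by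
    rw [zpow_neg, zpow_natCast, pow_succ]
  rw [hzp1, hzp2, hzp3]
  have hA0 : (t₁ : ℂ) ^ m ≠ 0 := pow_ne_zero _ ht₁0
  have hb0 : (t₂ : ℂ) ^ m ≠ 0 := pow_ne_zero _ ht₂0
  have hd1 : (1 : ℂ) - (t₁ * t₂)⁻¹ ≠ 0 := by
    rw [sub_ne_zero]
    intro h
    exact hp1 (sub_eq_zero.mpr (inv_eq_one.mp h.symm))
  have hd2 : (1 : ℂ) - (t₁ ^ m * t₁)⁻¹ ≠ 0 := by
    rw [sub_ne_zero]
    intro h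
    exact ha1 (sub_eq_zero.mpr (inv_eq_one.mp h.symm))
  have hd3 : (1 : ℂ) - (t₂ ^ m * t₂)⁻¹ ≠ 0 := by
    rw [sub_ne_zero]
    intro h
    exact hb1 (sub_eq_zero.mpr (inv_eq_one.mp h.symm))
  have key : (t₁ : ℂ) ^ n = t₁ ^ m * t₁ := pow_succ t₁ m
  have key2 : (t₂ : ℂ) ^ n = t₂ ^ m * t₂ := pow_succ t₂ m
  rw [key, key2]
  have hab0 : (t₁ : ℂ) ^ m * t₁ * (t₂ ^ m * t₂) ≠ 0 :=
    mul_ne_zero (mul_ne_zero hA0 ht₁0) (mul_ne_zero hb0 ht₂0)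
  have r1 : (1 : ℂ) - (t₁ * t₂)⁻¹ = (t₁ * t₂ - 1) / (t₁ * t₂) := by
    field_simp
  have r2 : (1 : ℂ) - (t₁ ^ m * t₁)⁻¹ = (t₁ ^ m * t₁ - 1) / (t₁ ^ m * t₁) := by
    field_simp
  have r3 : (1 : ℂ) - (t₂ ^ m * t₂)⁻¹ = (t₂ ^ m * t₂ - 1) / (t₂ ^ m * t₂) := by
    field_simp
  have r4 : (1 : ℂ) - (t₁ ^ m * t₁ * (t₂ ^ m * t₂))⁻¹
      = (t₁ ^ m * t₁ * (t₂ ^ m * t₂) - 1) / (t₁ ^ m * t₁ * (t₂ ^ m * t₂)) := by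
    field_simp
  rw [r1, r2, r3, r4]
  have ha1' : t₁ * t₁ ^ m - 1 ≠ 0 := by rw [mul_comm]; exact ha1
  have hb1' : t₂ * t₂ ^ m - 1 ≠ 0 := by rw [mul_comm]; exact hb1
  field_simp
  ring
end

section
/- Let n ≥ 1 and let t₁, t₂, y be complex numbers with t₁, t₂ ≠ 0, such that t₁^{n-k+1}·t₂^{k-1} ≠ 1 and t₂^k·t₁^{-(n-k)} ≠ 1 for all k = 1,…,n, and t₁t₂ ≠ 1, t₁^n ≠ 1, t₂^n ≠ 1. Then ∑_{k=1}^{n} [(1 - y·t₂^{k-1}/t₁^{n-k+1})/(1 - t₂^{k-1}/t₁^{n-k+1})] · [(1 - y·t₁^{n-k}/t₂^{k})/(1 - t₁^{n-k}/t₂^{k})] = (1-y)(1 - y·(t₁t₂)^{-1})·(1 - (t₁t₂)^{-n})/((1 - (t₁t₂)^{-1})(1 - t₁^{-n})(1 - t₂^{-n})) + n·y. -/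
/-- Pointwise partial-fraction / telescoping decomposition of each summand. -/
lemma key_term (a c y : ℂ) (ha0 : a ≠ 0) (hc0 : c ≠ 0) (ha1 : a ≠ 1) (hca : c * a ≠ 1)
    (hc1 : c ≠ 1) :
    (1 - y * a) / (1 - a) * ((1 - y * (c * a)⁻¹) / (1 - (c * a)⁻¹)) =
      y + (1 - y) * (c - y) / (c - 1) * (1 / (1 - a) - 1 / (1 - c * a)) := by
  have h1 : (1 : ℂ) - a ≠ 0 := sub_ne_zero.mpr (fun h => ha1 h.symm)
  have h2 : (1 : ℂ) - c * a ≠ 0 := sub_ne_zero.mpr (fun h => hca h.symm)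
  have h2' : c * a - 1 ≠ 0 := sub_ne_zero.mpr hca
  have h3 : c - 1 ≠ 0 := sub_ne_zero.mpr hc1
  have h4 : c * a ≠ 0 := mul_ne_zero hc0 ha0
  have h5 : (1 : ℂ) - (c * a)⁻¹ ≠ 0 := by
    rw [show (1 : ℂ) - (c*a)⁻¹ = (c*a - 1) / (c*a) by field_simp]
    exact div_ne_zero h2' h4
  have e : (1 - y * (c * a)⁻¹) / (1 - (c * a)⁻¹) = (c * a - y) / (c * a - 1) := by
    rw [div_eq_div_iff h5 h2']
    field_simp
  rw [e]
  rw [div_mul_div_comm, eq_comm, eq_div_iff (mul_ne_zero h1 h2')]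
  field_simp
  ring

lemma final_alg (p q c y : ℂ) (hp0 : p ≠ 0) (hq0 : q ≠ 0) (hc0 : c ≠ 0)
    (hp1 : p ≠ 1) (hq1 : q ≠ 1) (hc1 : c ≠ 1) :
    (1 - y) * (c - y) / (c - 1) * (1 / (1 - p⁻¹) - 1 / (1 - q)) =
      (1 - y) * (1 - y * c⁻¹) * (1 - (p * q)⁻¹) /
        ((1 - c⁻¹) * (1 - p⁻¹) * (1 - q⁻¹)) := by
  have hp' : p - 1 ≠ 0 := sub_ne_zero.mpr hp1
  have hq' : q - 1 ≠ 0 := sub_ne_zero.mpr hq1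
  have hc' : c - 1 ≠ 0 := sub_ne_zero.mpr hc1
  have hq2 : (1:ℂ) - q ≠ 0 := sub_ne_zero.mpr (fun h => hq1 h.symm)
  have ep : (1:ℂ) - p⁻¹ = (p - 1)/p := by field_simp
  have eq : (1:ℂ) - q⁻¹ = (q - 1)/q := by field_simp
  have ec : (1:ℂ) - c⁻¹ = (c - 1)/c := by field_simp
  have ey : (1:ℂ) - y * c⁻¹ = (c - y)/c := by field_simp
  have epq : (1:ℂ) - (p*q)⁻¹ = (p*q - 1)/(p*q) := by field_simp
  rw [ep, eq, ec, ey, epq]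
  field_simp
  ring

theorem stmt3 (n : ℕ) (hn : 1 ≤ n) (t₁ t₂ y : ℂ) (ht₁0 : t₁ ≠ 0) (ht₂0 : t₂ ≠ 0)
    (hden : ∀ k ∈ Finset.Icc 1 n,
      t₂ ^ ((k : ℤ) - 1) / t₁ ^ ((n : ℤ) - k + 1) ≠ 1 ∧ t₁ ^ ((n : ℤ) - k) / t₂ ^ (k : ℤ) ≠ 1)
    (ht₁₂ : t₁ * t₂ ≠ 1) (ht₁ : t₁ ^ n ≠ 1) (ht₂ : t₂ ^ n ≠ 1) :
    ∑ k ∈ Finset.Icc 1 n,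
        ((1 - y * t₂ ^ ((k : ℤ) - 1) / t₁ ^ ((n : ℤ) - k + 1)) /
            (1 - t₂ ^ ((k : ℤ) - 1) / t₁ ^ ((n : ℤ) - k + 1))) *
          ((1 - y * t₁ ^ ((n : ℤ) - k) / t₂ ^ (k : ℤ)) /
            (1 - t₁ ^ ((n : ℤ) - k) / t₂ ^ (k : ℤ))) =
      (1 - y) * (1 - y * (t₁ * t₂)⁻¹) * (1 - (t₁ * t₂) ^ (-(n : ℤ))) /
          ((1 - (t₁ * t₂)⁻¹) * (1 - t₁ ^ (-(n : ℤ))) * (1 - t₂ ^ (-(n : ℤ)))) + n * y := by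
  set N : ℤ := (n : ℤ) with hN
  set c : ℂ := t₁ * t₂ with hc
  have hc0 : c ≠ 0 := mul_ne_zero ht₁0 ht₂0
  have hc1 : c ≠ 1 := ht₁₂
  set a : ℕ → ℂ := fun k => t₂ ^ ((k : ℤ) - 1) * t₁ ^ ((k : ℤ) - N - 1) with hadef
  have ha0 : ∀ k, a k ≠ 0 := fun k =>
    mul_ne_zero (zpow_ne_zero _ ht₂0) (zpow_ne_zero _ ht₁0)
  have e1 : ∀ k : ℕ, t₂ ^ ((k : ℤ) - 1) / t₁ ^ (N - k + 1) = a k := by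
    intro k
    rw [hadef, div_eq_mul_inv, ← zpow_neg]
    congr 1
    ring
  have hprod : ∀ k : ℕ, c * a k = t₂ ^ (k : ℤ) * t₁ ^ ((k : ℤ) - N) := by
    intro k
    rw [hadef, hc]
    have : t₁ * t₂ * (t₂ ^ ((k : ℤ) - 1) * t₁ ^ ((k : ℤ) - N - 1)) =
        (t₂ ^ (1 : ℤ) * t₂ ^ ((k : ℤ) - 1)) * (t₁ ^ (1 : ℤ) * t₁ ^ ((k : ℤ) - N - 1)) := by
      rw [zpow_one, zpow_one]; ring
    rw [this, ← zpow_add₀ ht₂0, ← zpow_add₀ ht₁0]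
    norm_num
  have e2 : ∀ k : ℕ, t₁ ^ (N - k) / t₂ ^ (k : ℤ) = (c * a k)⁻¹ := by
    intro k
    rw [hprod k, mul_inv, ← zpow_neg, ← zpow_neg, div_eq_mul_inv, ← zpow_neg]
    rw [show -((k : ℤ) - N) = N - k by ring]
    ring
  have hstep : ∀ k : ℕ, a (k + 1) = c * a k := by
    intro k
    rw [hprod k, hadef]
    push_cast
    ring_nf
  have ha1 : ∀ k ∈ Finset.Icc 1 n, a k ≠ 1 := by
    intro k hk
    have := (hden k hk).1
    rwa [e1] at this
  have hca1 : ∀ k ∈ Finset.Icc 1 n, c * a k ≠ 1 := by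
    intro k hk
    have h := (hden k hk).2
    rw [e2] at h
    intro hone
    exact h (by rw [hone]; norm_num)
  set D : ℂ := (1 - y) * (c - y) / (c - 1) with hD
  set g : ℕ → ℂ := fun k => 1 / (1 - a k) with hg
  have hterm : ∀ k ∈ Finset.Icc 1 n,
      ((1 - y * t₂ ^ ((k : ℤ) - 1) / t₁ ^ (N - k + 1)) /
          (1 - t₂ ^ ((k : ℤ) - 1) / t₁ ^ (N - k + 1))) *
        ((1 - y * t₁ ^ (N - k) / t₂ ^ (k : ℤ)) /
          (1 - t₁ ^ (N - k) / t₂ ^ (k : ℤ))) = y + D * (g k - g (k + 1)) := by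
    intro k hk
    rw [mul_div_assoc y, mul_div_assoc y, e1, e2]
    have := key_term (a k) c y (ha0 k) hc0 (ha1 k hk) (hca1 k hk) hc1
    rw [this]
    simp only [hg, hD, hstep k]
  rw [Finset.sum_congr rfl hterm]
  rw [Finset.sum_add_distrib, Finset.sum_const, ← Finset.mul_sum, Nat.card_Icc]
  have htel : ∀ m : ℕ, ∑ k ∈ Finset.Icc 1 m, (g k - g (k + 1)) = g 1 - g (m + 1) := by
    intro m
    induction m with
    | zero => simp
    | succ m ih =>
      rw [Finset.sum_Icc_succ_top (by omega), ih]
      ring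
  rw [htel n]
  have hg1 : g 1 = 1 / (1 - t₁ ^ (-N)) := by
    rw [hg, hadef]
    norm_num
  have hgn : g (n + 1) = 1 / (1 - t₂ ^ N) := by
    rw [hg, hadef]
    push_cast
    norm_num
    rw [hN, zpow_natCast]
    simp
  rw [hg1, hgn, hD]
  have hp0 : t₁ ^ N ≠ 0 := zpow_ne_zero _ ht₁0
  have hq0 : t₂ ^ N ≠ 0 := zpow_ne_zero _ ht₂0
  have hp1 : t₁ ^ N ≠ 1 := by rw [hN, zpow_natCast]; exact ht₁
  have hq1 : t₂ ^ N ≠ 1 := by rw [hN, zpow_natCast]; exact ht₂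
  have hpows : (t₁ * t₂) ^ (-N) = ((t₁ ^ N) * (t₂ ^ N))⁻¹ := by
    rw [zpow_neg, mul_zpow]
  have ht1inv : t₁ ^ (-N) = (t₁ ^ N)⁻¹ := zpow_neg t₁ N
  have ht2inv : t₂ ^ (-N) = (t₂ ^ N)⁻¹ := zpow_neg t₂ N
  have hcinv : (t₁ * t₂)⁻¹ = c⁻¹ := by rw [hc]
  rw [hpows, ht1inv, ht2inv, hcinv]
  have := final_alg (t₁ ^ N) (t₂ ^ N) c y hp0 hq0 hc0 hp1 hq1 hc1
  rw [this]
  simp only [show n + 1 - 1 = n from rfl, nsmul_eq_mul]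
  ring
end

section
/- For complex numbers a, b, c, d (such that all theta values below are nonzero where needed), the Fay trisecant identity holds: θ(a+c)θ(a-c)θ(b+d)θ(b-d) = θ(a+b)θ(a-b)θ(c+d)θ(c-d) + θ(a+d)θ(a-d)θ(b+c)θ(b-c), where θ = θ_τ is the Jacobi theta function for a fixed τ with Im(τ) > 0. -/
/-- The Jacobi theta function
`θ_τ(υ) = (1/i) ∑_{n ∈ ℤ} (-1)^n exp(πiτ(n+1/2)²) exp(πi(2n+1)υ)`. -/
noncomputable def theta (τ υ : ℂ) : ℂ :=
  (1 / Complex.I) * ∑' n : ℤ, (-1 : ℂ) ^ n *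
    Complex.exp ((Real.pi : ℂ) * Complex.I * τ * ((n : ℂ) + 1 / 2) ^ 2) *
    Complex.exp ((Real.pi : ℂ) * Complex.I * (2 * (n : ℂ) + 1) * υ)

/-!
Write `θ(u) = (1/i) ∑ₙ (-1)ⁿ exp(πi(τ m²/4 + m u))` with `m = 2n + 1`. The product of four theta
functions is then a sum over `n ∈ ℤ⁴` of `(-1)^(∑ nᵢ)` times a Gaussian in `m ∈ (2ℤ + 1)⁴`.
On the terms with `∑ nᵢ` even, the orthogonal substitution `x = H m / 4`, `H` the 4 × 4 Hadamard
matrix, is a bijection onto the points of `ℤ⁴` with odd coordinate sum; on those with `∑ nᵢ` odd a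
second such substitution does the same. Hence each of the three products in the identity is a
difference of two lattice sums `L(w) = ∑_{x ∈ ℤ⁴, ∑ xᵢ odd} exp(πi(τ|x|² + 2⟨x, w⟩))`, and since
`L` is invariant under `w₄ ↦ -w₄`, the six lattice sums cancel in pairs.
-/

noncomputable section

open Complex
open scoped Real

theorem hasSum_mul_mul_mul {R α β γ δ : Type*} [NormedRing R] [CompleteSpace R]
    {f : α → R} {g : β → R} {h : γ → R} {k : δ → R}
    (hf : Summable fun a => ‖f a‖) (hg : Summable fun b => ‖g b‖)
    (hh : Summable fun c => ‖h c‖) (hk : Summable fun d => ‖k d‖) :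
    HasSum (fun x : α × β × γ × δ => f x.1 * (g x.2.1 * (h x.2.2.1 * k x.2.2.2)))
      ((∑' a, f a) * ((∑' b, g b) * ((∑' c, h c) * ∑' d, k d))) := by
  have hhk := hh.mul_norm hk
  have hghk := hg.mul_norm hhk
  rw [tsum_mul_tsum_of_summable_norm hh hk, tsum_mul_tsum_of_summable_norm hg hhk,
    tsum_mul_tsum_of_summable_norm hf hghk]
  exact (summable_mul_of_summable_norm hf hghk).hasSum

namespace Fay

def thetaTerm (τ u : ℂ) (n : ℤ) : ℂ :=
  (-1 : ℂ) ^ n * exp (π * I * τ * ((n : ℂ) + 1 / 2) ^ 2) *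
    exp (π * I * (2 * (n : ℂ) + 1) * u)

theorem theta_eq_tsum (τ u : ℂ) : theta τ u = 1 / I * ∑' n, thetaTerm τ u n := rfl

theorem thetaTerm_eq (τ u : ℂ) (n : ℤ) :
    thetaTerm τ u n = (-1 : ℂ) ^ n *
      exp (π * I * (τ / 4 * ((2 * n + 1 : ℤ) : ℂ) ^ 2 + ((2 * n + 1 : ℤ) : ℂ) * u)) := by
  rw [thetaTerm, mul_assoc, ← exp_add]
  push_cast
  ring_nf

theorem summable_thetaTerm {τ : ℂ} (hτ : 0 < τ.im) (u : ℂ) : Summable (thetaTerm τ u) := by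
  refine (((summable_jacobiTheta₂_term_iff (u + (τ + 1) / 2) τ).mpr hτ).mul_left
    (exp (π * I * (τ / 4 + u)))).congr fun n => ?_
  rw [jacobiTheta₂_term, ← exp_add, thetaTerm_eq, ← exp_pi_mul_I, ← exp_int_mul, ← exp_add]
  push_cast
  ring_nf

def thetaTerm₄ (τ u₁ u₂ u₃ u₄ : ℂ) (n : ℤ × ℤ × ℤ × ℤ) : ℂ :=
  thetaTerm τ u₁ n.1 * (thetaTerm τ u₂ n.2.1 * (thetaTerm τ u₃ n.2.2.1 * thetaTerm τ u₄ n.2.2.2))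

theorem hasSum_thetaTerm₄ {τ : ℂ} (hτ : 0 < τ.im) (u₁ u₂ u₃ u₄ : ℂ) :
    HasSum (thetaTerm₄ τ u₁ u₂ u₃ u₄)
      (theta τ u₁ * theta τ u₂ * theta τ u₃ * theta τ u₄) := by
  have hN (u : ℂ) : Summable fun n => ‖thetaTerm τ u n‖ :=
    summable_norm_iff.mpr (summable_thetaTerm hτ u)
  have hI : (1 / I) ^ 2 = -1 := by rw [div_pow, I_sq]; norm_num
  have hprod : theta τ u₁ * theta τ u₂ * theta τ u₃ * theta τ u₄ = (∑' n, thetaTerm τ u₁ n) *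
      ((∑' n, thetaTerm τ u₂ n) * ((∑' n, thetaTerm τ u₃ n) * ∑' n, thetaTerm τ u₄ n)) := by
    rw [theta_eq_tsum, theta_eq_tsum, theta_eq_tsum, theta_eq_tsum]
    linear_combination ((1 / I) ^ 2 - 1) * (∑' n, thetaTerm τ u₁ n) * (∑' n, thetaTerm τ u₂ n) *
      (∑' n, thetaTerm τ u₃ n) * (∑' n, thetaTerm τ u₄ n) * hI
  rw [hprod]
  exact hasSum_mul_mul_mul (hN u₁) (hN u₂) (hN u₃) (hN u₄)

theorem thetaTerm₄_eq (τ u₁ u₂ u₃ u₄ : ℂ) (n₁ n₂ n₃ n₄ : ℤ) :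
    thetaTerm₄ τ u₁ u₂ u₃ u₄ (n₁, n₂, n₃, n₄) = (-1 : ℂ) ^ (n₁ + n₂ + n₃ + n₄) *
      exp (π * I * (τ / 4 * (((2 * n₁ + 1 : ℤ) : ℂ) ^ 2 + ((2 * n₂ + 1 : ℤ) : ℂ) ^ 2 +
          ((2 * n₃ + 1 : ℤ) : ℂ) ^ 2 + ((2 * n₄ + 1 : ℤ) : ℂ) ^ 2) +
        (((2 * n₁ + 1 : ℤ) : ℂ) * u₁ + ((2 * n₂ + 1 : ℤ) : ℂ) * u₂ +
          ((2 * n₃ + 1 : ℤ) : ℂ) * u₃ + ((2 * n₄ + 1 : ℤ) : ℂ) * u₄))) := by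
  simp only [thetaTerm₄, thetaTerm_eq, zpow_add₀ (by norm_num : (-1 : ℂ) ≠ 0), mul_add, exp_add]
  ring

def latticeTerm (τ w₁ w₂ w₃ w₄ : ℂ) (x : ℤ × ℤ × ℤ × ℤ) : ℂ :=
  exp (π * I * (τ * ((x.1 : ℂ) ^ 2 + (x.2.1 : ℂ) ^ 2 + (x.2.2.1 : ℂ) ^ 2 + (x.2.2.2 : ℂ) ^ 2) +
    2 * ((x.1 : ℂ) * w₁ + (x.2.1 : ℂ) * w₂ + (x.2.2.1 : ℂ) * w₃ + (x.2.2.2 : ℂ) * w₄)))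

def coordSum (x : ℤ × ℤ × ℤ × ℤ) : ℤ := x.1 + x.2.1 + x.2.2.1 + x.2.2.2

def oddLatticeSum (τ w₁ w₂ w₃ w₄ : ℂ) : ℂ :=
  ∑' x : {x : ℤ × ℤ × ℤ × ℤ // Odd (coordSum x)}, latticeTerm τ w₁ w₂ w₃ w₄ x

theorem oddLatticeSum_neg (τ w₁ w₂ w₃ w₄ : ℂ) :
    oddLatticeSum τ w₁ w₂ w₃ (-w₄) = oddLatticeSum τ w₁ w₂ w₃ w₄ := by
  let e : {x : ℤ × ℤ × ℤ × ℤ // Odd (coordSum x)} ≃ {x : ℤ × ℤ × ℤ × ℤ // Odd (coordSum x)} :=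
    (Equiv.prodCongr (.refl ℤ) (.prodCongr (.refl ℤ) (.prodCongr (.refl ℤ) (.neg ℤ)))).subtypeEquiv
      fun x => by
        simp only [coordSum, Equiv.prodCongr_apply, Prod.map, Equiv.refl_apply, Equiv.neg_apply,
          ← sub_eq_add_neg, Int.odd_sub, Int.odd_add]
  rw [oddLatticeSum, ← e.tsum_eq]
  refine tsum_congr fun ⟨⟨x₁, x₂, x₃, x₄⟩, hx⟩ => ?_
  change latticeTerm τ w₁ w₂ w₃ (-w₄) (x₁, x₂, x₃, -x₄) = latticeTerm τ w₁ w₂ w₃ w₄ (x₁, x₂, x₃, x₄)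
  simp only [latticeTerm]
  push_cast
  ring_nf

theorem thetaTerm₄_eq_latticeTerm_of_even (τ p q r s : ℂ) {n₁ n₂ n₃ n₄ x₁ x₂ x₃ x₄ : ℤ}
    (h₁ : 2 * n₁ + 1 = x₁ + x₂ + x₃ + x₄) (h₂ : 2 * n₂ + 1 = x₁ + x₂ - x₃ - x₄)
    (h₃ : 2 * n₃ + 1 = x₁ - x₂ + x₃ - x₄) (h₄ : 2 * n₄ + 1 = x₁ - x₂ - x₃ + x₄) :
    thetaTerm₄ τ (p + q) (p - q) (r + s) (r - s) (n₁, n₂, n₃, n₄) =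
      latticeTerm τ (p + r) (p - r) (q + s) (q - s) (x₁, x₂, x₃, x₄) := by
  rw [thetaTerm₄_eq, h₁, h₂, h₃, h₄, Even.neg_one_zpow ⟨x₁ - 1, by omega⟩, one_mul, latticeTerm]
  congr 1
  push_cast
  ring

theorem thetaTerm₄_eq_neg_latticeTerm_of_odd (τ p q r s : ℂ) {n₁ n₂ n₃ n₄ y₁ y₂ y₃ y₄ : ℤ}
    (h₁ : 2 * n₁ + 1 = y₁ + y₂ + y₃ - y₄) (h₂ : 2 * n₂ + 1 = y₁ + y₂ - y₃ + y₄)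
    (h₃ : 2 * n₃ + 1 = y₁ - y₂ + y₃ + y₄) (h₄ : 2 * n₄ + 1 = -y₁ + y₂ + y₃ + y₄) :
    thetaTerm₄ τ (p + q) (p - q) (r + s) (r - s) (n₁, n₂, n₃, n₄) =
      -latticeTerm τ (p + s) (p - s) (r + q) (r - q) (y₁, y₂, y₃, y₄) := by
  rw [thetaTerm₄_eq, h₁, h₂, h₃, h₄, Odd.neg_one_zpow ⟨n₁ + y₄ - 1, by omega⟩, neg_one_mul,
    latticeTerm]
  congr 2
  push_cast
  ring

def evenEquiv :
    {x : ℤ × ℤ × ℤ × ℤ // Odd (coordSum x)} ≃ {n : ℤ × ℤ × ℤ × ℤ // Even (coordSum n)} where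
  toFun
    | ⟨(x₁, x₂, x₃, x₄), hx⟩ =>
      ⟨((x₁ + x₂ + x₃ + x₄ - 1) / 2, (x₁ + x₂ - x₃ - x₄ - 1) / 2, (x₁ - x₂ + x₃ - x₄ - 1) / 2,
        (x₁ - x₂ - x₃ + x₄ - 1) / 2), by
        simp only [coordSum, Int.odd_iff, Int.even_iff] at hx ⊢; omega⟩
  invFun
    | ⟨(n₁, n₂, n₃, n₄), hn⟩ =>
      ⟨((n₁ + n₂ + n₃ + n₄ + 2) / 2, (n₁ + n₂ - n₃ - n₄) / 2, (n₁ - n₂ + n₃ - n₄) / 2,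
        (n₁ - n₂ - n₃ + n₄) / 2), by
        simp only [coordSum, Int.odd_iff, Int.even_iff] at hn ⊢; omega⟩
  left_inv := fun ⟨(x₁, x₂, x₃, x₄), hx⟩ => by
    simp only [coordSum, Int.odd_iff] at hx
    simp only [Subtype.mk.injEq, Prod.mk.injEq]
    omega
  right_inv := fun ⟨(n₁, n₂, n₃, n₄), hn⟩ => by
    simp only [coordSum, Int.even_iff] at hn
    simp only [Subtype.mk.injEq, Prod.mk.injEq]
    omega

def oddEquiv :
    {y : ℤ × ℤ × ℤ × ℤ // Odd (coordSum y)} ≃ {n : ℤ × ℤ × ℤ × ℤ // ¬Even (coordSum n)} where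
  toFun
    | ⟨(y₁, y₂, y₃, y₄), hy⟩ =>
      ⟨((y₁ + y₂ + y₃ - y₄ - 1) / 2, (y₁ + y₂ - y₃ + y₄ - 1) / 2, (y₁ - y₂ + y₃ + y₄ - 1) / 2,
        (-y₁ + y₂ + y₃ + y₄ - 1) / 2), by
        simp only [coordSum, Int.odd_iff, Int.even_iff] at hy ⊢; omega⟩
  invFun
    | ⟨(n₁, n₂, n₃, n₄), hn⟩ =>
      ⟨((n₁ + n₂ + n₃ - n₄ + 1) / 2, (n₁ + n₂ - n₃ + n₄ + 1) / 2, (n₁ - n₂ + n₃ + n₄ + 1) / 2,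
        (-n₁ + n₂ + n₃ + n₄ + 1) / 2), by
        simp only [coordSum, Int.odd_iff, Int.even_iff] at hn ⊢; omega⟩
  left_inv := fun ⟨(y₁, y₂, y₃, y₄), hy⟩ => by
    simp only [coordSum, Int.odd_iff] at hy
    simp only [Subtype.mk.injEq, Prod.mk.injEq]
    omega
  right_inv := fun ⟨(n₁, n₂, n₃, n₄), hn⟩ => by
    simp only [coordSum, Int.even_iff] at hn
    simp only [Subtype.mk.injEq, Prod.mk.injEq]
    omega

theorem theta_mul_theta_mul_theta_mul_theta {τ : ℂ} (hτ : 0 < τ.im) (p q r s : ℂ) :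
    theta τ (p + q) * theta τ (p - q) * theta τ (r + s) * theta τ (r - s) =
      oddLatticeSum τ (p + r) (p - r) (q + s) (q - s) -
        oddLatticeSum τ (p + s) (p - s) (r + q) (r - q) := by
  have hF := hasSum_thetaTerm₄ hτ (p + q) (p - q) (r + s) (r - s)
  have heven : ∑' n : {n // Even (coordSum n)}, thetaTerm₄ τ (p + q) (p - q) (r + s) (r - s) n =
      oddLatticeSum τ (p + r) (p - r) (q + s) (q - s) := by
    rw [oddLatticeSum, ← evenEquiv.tsum_eq]
    refine tsum_congr fun ⟨⟨x₁, x₂, x₃, x₄⟩, hx⟩ => ?_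
    simp only [coordSum, Int.odd_iff] at hx
    exact thetaTerm₄_eq_latticeTerm_of_even τ p q r s (by omega) (by omega) (by omega) (by omega)
  have hodd : ∑' n : {n // ¬Even (coordSum n)}, thetaTerm₄ τ (p + q) (p - q) (r + s) (r - s) n =
      -oddLatticeSum τ (p + s) (p - s) (r + q) (r - q) := by
    rw [oddLatticeSum, ← tsum_neg, ← oddEquiv.tsum_eq]
    refine tsum_congr fun ⟨⟨y₁, y₂, y₃, y₄⟩, hy⟩ => ?_
    simp only [coordSum, Int.odd_iff] at hy
    exact thetaTerm₄_eq_neg_latticeTerm_of_odd τ p q r s (by omega) (by omega) (by omega) (by omega)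
  rw [← hF.tsum_eq, ← hF.summable.tsum_subtype_add_tsum_subtype_compl {n | Even (coordSum n)}]
  exact (congrArg₂ (· + ·) heven hodd).trans (sub_eq_add_neg _ _).symm

theorem oddLatticeSum_add_sub_comm (τ w₁ w₂ p q : ℂ) :
    oddLatticeSum τ w₁ w₂ (p + q) (p - q) = oddLatticeSum τ w₁ w₂ (q + p) (q - p) := by
  rw [← oddLatticeSum_neg, neg_sub, add_comm p q]

end Fay

end

theorem stmt11 (τ a b c d : ℂ) (hτ : 0 < τ.im) :
    theta τ (a + c) * theta τ (a - c) * theta τ (b + d) * theta τ (b - d) =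
      theta τ (a + b) * theta τ (a - b) * theta τ (c + d) * theta τ (c - d) +
      theta τ (a + d) * theta τ (a - d) * theta τ (b + c) * theta τ (b - c) := by
  rw [Fay.theta_mul_theta_mul_theta_mul_theta hτ a c b d,
    Fay.theta_mul_theta_mul_theta_mul_theta hτ a b c d,
    Fay.theta_mul_theta_mul_theta_mul_theta hτ a d b c,
    Fay.oddLatticeSum_add_sub_comm τ _ _ c b, Fay.oddLatticeSum_add_sub_comm τ _ _ d c]
  ring
end

section
/- Let n ≥ 2 and let ζ = exp(2πi/n). Then for complex T with T² ≠ 1 and T^n ≠ 1, (1/n) ∑_{k=0}^{n-1} (1 - ζ^k T)^{-1}(1 - ζ^{-k} T)^{-1} = (1 - T^{2n})/((1 - T²)(1 - T^n)²). -/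
open Finset

lemma key_geom {ζ T : ℂ} (k n : ℕ) (hz : ζ ^ n = 1) :
    (1 - ζ ^ k * T) * (∑ i ∈ range n, (ζ ^ k * T) ^ i) = 1 - T ^ n := by
  have hg := geom_sum_mul (ζ ^ k * T) n
  have hx : (ζ ^ k * T) ^ n = T ^ n := by
    rw [mul_pow, ← pow_mul, mul_comm k n, pow_mul, hz, one_pow, one_mul]
  linear_combination -hg - hx

lemma partial_frac {a b T : ℂ} (h1 : 1 - a*T ≠ 0) (h2 : 1 - b*T ≠ 0)
    (hT2 : (1:ℂ) - T^2 ≠ 0) (hinv : a*b = 1) :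
    1 / ((1-a*T)*(1-b*T)) = (1/(1-T^2)) * (1/(1-a*T) + 1/(1-b*T) - 1) := by
  rw [div_add_div _ _ h1 h2, div_sub_one (mul_ne_zero h1 h2), div_mul_div_comm, div_eq_div_iff (mul_ne_zero h1 h2) (mul_ne_zero hT2 (mul_ne_zero h1 h2))]
  linear_combination (T^2 * (1-a*T)*(1-b*T)) * hinv

lemma factor_ne_zero {n : ℕ} {ζ T : ℂ} (hz : ζ ^ n = 1) (hTn : T ^ n ≠ 1) (k : ℕ) :
    (1 : ℂ) - ζ ^ k * T ≠ 0 := by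
  intro hk
  have h := key_geom (T := T) k n hz
  rw [hk, zero_mul] at h
  exact hTn (by linear_combination h)

lemma sum_inv_one_sub_root {n : ℕ} (hn : 0 < n) {ζ T : ℂ}
    (h : IsPrimitiveRoot ζ n) (hTn : T ^ n ≠ 1) :
    ∑ k ∈ range n, 1 / (1 - ζ ^ k * T) = n / (1 - T ^ n) := by
  have h0 : (1 : ℂ) - T ^ n ≠ 0 := sub_ne_zero.mpr (Ne.symm hTn)
  have hz : ζ ^ n = 1 := h.pow_eq_one
  have hne := factor_ne_zero hz hTn (T := T)
  have step : ∀ k ∈ range n, 1 / (1 - ζ ^ k * T)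
      = (∑ i ∈ range n, (ζ ^ k * T) ^ i) / (1 - T ^ n) := by
    intro k _
    rw [div_eq_div_iff (hne k) h0]
    linear_combination -key_geom (T := T) k n hz
  rw [Finset.sum_congr rfl step, ← Finset.sum_div]
  congr 1
  have expand : ∀ k ∈ range n, (∑ i ∈ range n, (ζ ^ k * T) ^ i)
      = ∑ i ∈ range n, (ζ ^ i) ^ k * T ^ i := by
    intro k _
    refine Finset.sum_congr rfl fun i _ => ?_
    rw [mul_pow, ← pow_mul, ← pow_mul, mul_comm k i]
  rw [Finset.sum_congr rfl expand, Finset.sum_comm]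
  have inner : ∀ i ∈ range n, (∑ k ∈ range n, (ζ ^ i) ^ k * T ^ i)
      = if i = 0 then (n : ℂ) else 0 := by
    intro i hi
    rw [← Finset.sum_mul]
    by_cases h0' : i = 0
    · simp [h0']
    · have hne1 : ζ ^ i ≠ 1 :=
        h.pow_ne_one_of_pos_of_lt h0' (Finset.mem_range.mp hi)
      rw [geom_sum_eq hne1, ← pow_mul, mul_comm i n, pow_mul, hz, one_pow]
      simp [h0']
  rw [Finset.sum_congr rfl inner, Finset.sum_ite_eq' (range n) 0 (fun _ => (n : ℂ))]
  simp [Finset.mem_range.mpr hn]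

theorem stmt14 (n : ℕ) (hn : 2 ≤ n) (T : ℂ) (hT2 : T ^ 2 ≠ 1) (hTn : T ^ n ≠ 1)
    (ζ : ℂ) (hζ : ζ = Complex.exp (2 * Real.pi * Complex.I / (n : ℂ))) :
    (1 / (n : ℂ)) * ∑ k ∈ Finset.range n, 1 / ((1 - ζ ^ k * T) * (1 - ζ ^ (-(k : ℤ)) * T)) =
      (1 - T ^ (2 * n)) / ((1 - T ^ 2) * (1 - T ^ n) ^ 2) := by
  have hn0 : 0 < n := by omega
  have hprim : IsPrimitiveRoot ζ n := by
    rw [hζ]; exact Complex.isPrimitiveRoot_exp n (by omega)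
  have hprim' : IsPrimitiveRoot ζ⁻¹ n := hprim.inv
  have h0 : (1 : ℂ) - T ^ n ≠ 0 := sub_ne_zero.mpr (Ne.symm hTn)
  have h2 : (1 : ℂ) - T ^ 2 ≠ 0 := sub_ne_zero.mpr (Ne.symm hT2)
  have hζ0 : ζ ≠ 0 := hprim.ne_zero (by omega)
  have hne := factor_ne_zero hprim.pow_eq_one hTn (T := T)
  have hne' := factor_ne_zero hprim'.pow_eq_one hTn (T := T)
  have hzpow : ∀ k : ℕ, ζ ^ (-(k : ℤ)) = (ζ⁻¹) ^ k := by
    intro k; rw [zpow_neg, zpow_natCast, inv_pow]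
  have pf : ∀ k ∈ range n, 1 / ((1 - ζ ^ k * T) * (1 - ζ ^ (-(k : ℤ)) * T))
      = (1 / (1 - T ^ 2)) * (1 / (1 - ζ ^ k * T) + 1 / (1 - (ζ⁻¹) ^ k * T) - 1) := by
    intro k _
    rw [hzpow k]
    have hinv : ζ ^ k * (ζ⁻¹) ^ k = 1 := by
      rw [← mul_pow, mul_inv_cancel₀ hζ0, one_pow]
    exact partial_frac (hne k) (hne' k) h2 hinv
  rw [Finset.sum_congr rfl pf, ← Finset.mul_sum]
  have s1 := sum_inv_one_sub_root hn0 hprim hTn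
  have s2 := sum_inv_one_sub_root hn0 hprim' hTn
  have hsum : ∑ k ∈ range n, (1 / (1 - ζ ^ k * T) + 1 / (1 - (ζ⁻¹) ^ k * T) - 1)
      = n / (1 - T ^ n) + n / (1 - T ^ n) - n := by
    rw [Finset.sum_sub_distrib, Finset.sum_add_distrib, s1, s2]
    simp
  rw [hsum]
  have hnc : (n : ℂ) ≠ 0 := Nat.cast_ne_zero.mpr (by omega)
  have h2n : T ^ (2 * n) = (T ^ n) ^ 2 := by rw [mul_comm, pow_mul]
  rw [h2n]
  field_simp
  ring
end

section
/- Let n ≥ 2 and let δ₀(A,B) = (1 - AB)/((1 - A)(1 - B)). For nonzero complex numbers t₁,…,t_n and μ₁,…,μ_n such that all denominators below are nonzero (in particular t_i ≠ 1, μ_i ≠ 1, t_i ≠ t_j for i ≠ j, and ∏μ_j ≠ 1), one has ∏_{i=1}^n δ₀(t_i, μ_i) = ∑_{i=1}^n [ δ₀(t_i, ∏_{j=1}^n μ_j) · ∏_{j≠i} δ₀(t_j/t_i, μ_j) ]. -/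
/-- `δ₀(A,B) = (1 - AB)/((1 - A)(1 - B))`, the trigonometric degeneration of `δ`. -/
noncomputable def delta0 (A B : ℂ) : ℂ := (1 - A * B) / ((1 - A) * (1 - B))

open Finset Filter Topology

lemma delta0_div (a b y : ℂ) (ha : a ≠ 0) (hab : a ≠ b) (hy : y ≠ 1) :
    delta0 (b / a) y = (a - b * y) / ((a - b) * (1 - y)) := by
  have h1 : (1 : ℂ) - b / a ≠ 0 := by
    rw [sub_ne_zero]
    intro h
    exact hab ((div_eq_one_iff_eq ha).mp h.symm).symm
  have h2 : (1 : ℂ) - y ≠ 0 := sub_ne_zero.mpr hy.symm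
  have h3 : a - b ≠ 0 := sub_ne_zero.mpr hab
  unfold delta0
  rw [div_eq_div_iff (mul_ne_zero h1 h2) (mul_ne_zero h3 h2)]
  field_simp

set_option maxHeartbeats 1600000 in
lemma fay (a b x y : ℂ) (ha0 : a ≠ 0) (hb0 : b ≠ 0) (ha : a ≠ 1) (hb : b ≠ 1)
    (hx : x ≠ 1) (hy : y ≠ 1) (hab : a ≠ b) (hxy : x * y ≠ 1) :
    delta0 a x * delta0 b y =
      delta0 a (x * y) * delta0 (b / a) y + delta0 b (x * y) * delta0 (a / b) x := by
  have h1 : (1 : ℂ) - a ≠ 0 := sub_ne_zero.mpr ha.symm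
  have h2 : (1 : ℂ) - b ≠ 0 := sub_ne_zero.mpr hb.symm
  have h3 : (1 : ℂ) - x ≠ 0 := sub_ne_zero.mpr hx.symm
  have h4 : (1 : ℂ) - y ≠ 0 := sub_ne_zero.mpr hy.symm
  have h5 : (1 : ℂ) - x * y ≠ 0 := sub_ne_zero.mpr hxy.symm
  have h6 : a - b ≠ 0 := sub_ne_zero.mpr hab
  have h7 : b - a ≠ 0 := sub_ne_zero.mpr hab.symm
  have d1 : (1 - a) * (1 - x * y) * ((a - b) * (1 - y)) ≠ 0 :=
    mul_ne_zero (mul_ne_zero h1 h5) (mul_ne_zero h6 h4)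
  have d2 : (1 - b) * (1 - x * y) * ((b - a) * (1 - x)) ≠ 0 :=
    mul_ne_zero (mul_ne_zero h2 h5) (mul_ne_zero h7 h3)
  have d3 : (1 - a) * (1 - x) * ((1 - b) * (1 - y)) ≠ 0 :=
    mul_ne_zero (mul_ne_zero h1 h3) (mul_ne_zero h2 h4)
  have d4 : (1 - a) * (1 - x * y) * ((a - b) * (1 - y)) *
      ((1 - b) * (1 - x * y) * ((b - a) * (1 - x))) ≠ 0 := mul_ne_zero d1 d2
  rw [delta0_div a b y ha0 hab hy, delta0_div b a x hb0 hab.symm hx]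
  unfold delta0
  rw [div_mul_div_comm, div_mul_div_comm, div_mul_div_comm, div_add_div _ _ d1 d2,
    div_eq_div_iff d3 d4]
  ring

lemma erase_last (n : ℕ) :
    (univ : Finset (Fin (n + 1))).erase (Fin.last n) = univ.map Fin.castSuccEmb := by
  ext i
  simp only [Finset.mem_erase, Finset.mem_univ, and_true, Finset.mem_map]
  constructor
  · intro h
    obtain ⟨j, hj⟩ := Fin.exists_castSucc_eq.mpr h
    exact ⟨j, trivial, hj⟩
  · rintro ⟨j, -, rfl⟩
    exact (Fin.castSucc_lt_last j).ne

lemma prod_erase_castSucc {M : Type*} [CommMonoid M] (n : ℕ) (f : Fin (n + 1) → M) (i : Fin n) :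
    ∏ j ∈ univ.erase (Fin.castSucc i), f j =
      f (Fin.last n) * ∏ j ∈ univ.erase i, f (Fin.castSucc j) := by
  have key : (univ : Finset (Fin (n + 1))).erase (Fin.castSucc i) =
      insert (Fin.last n) ((univ.erase i).map Fin.castSuccEmb) := by
    rw [Finset.map_erase]
    have h1 : (Fin.castSuccEmb : Fin n ↪ Fin (n + 1)) i = Fin.castSucc i := rfl
    rw [h1, ← erase_last, Finset.erase_right_comm, Finset.insert_erase]
    exact Finset.mem_erase.mpr ⟨(Fin.castSucc_lt_last i).ne', Finset.mem_univ _⟩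
  rw [key, Finset.prod_insert, Finset.prod_map]
  · rfl
  · simp only [Finset.mem_map, Finset.mem_erase]
    rintro ⟨j, -, hj⟩
    exact (Fin.castSucc_lt_last j).ne hj

lemma filter_lt_castSucc {M : Type*} [CommMonoid M] (n k : ℕ) (hk : k ≤ n) (f : Fin (n + 1) → M) :
    ∏ j ∈ univ.filter (fun j : Fin (n + 1) => (j : ℕ) < k), f j =
      ∏ j ∈ univ.filter (fun j : Fin n => (j : ℕ) < k), f (Fin.castSucc j) := by
  have key : (univ.filter (fun j : Fin (n + 1) => (j : ℕ) < k)) =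
      (univ.filter (fun j : Fin n => (j : ℕ) < k)).map Fin.castSuccEmb := by
    ext j
    simp only [Finset.mem_filter, Finset.mem_univ, true_and, Finset.mem_map]
    constructor
    · intro hj
      exact ⟨⟨(j : ℕ), lt_of_lt_of_le hj hk⟩, by simpa using hj,
        by simp [Fin.castSuccEmb, Fin.ext_iff]⟩
    · rintro ⟨i, hi, rfl⟩
      simpa using hi
  rw [key, Finset.prod_map]
  rfl

lemma aux : ∀ n : ℕ, 2 ≤ n → ∀ t μ : Fin n → ℂ,
    (∀ i, t i ≠ 0) → (∀ i, μ i ≠ 0) → (∀ i, t i ≠ 1) → (∀ i, μ i ≠ 1) →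
    (∀ i j, i ≠ j → t i ≠ t j) →
    (∀ k, 2 ≤ k → k ≤ n → ∏ j ∈ univ.filter (fun j : Fin n => (j : ℕ) < k), μ j ≠ 1) →
    ∏ i, delta0 (t i) (μ i) =
      ∑ i, delta0 (t i) (∏ j, μ j) * ∏ j ∈ univ.erase i, delta0 (t j / t i) (μ j) := by
  intro n hn
  induction n, hn using Nat.le_induction with
  | base =>
    intro t μ ht0 hμ0 ht1 hμ1 htij hpre
    have hμμ : μ 0 * μ 1 ≠ 1 := by
      have h := hpre 2 le_rfl le_rfl
      rwa [show (univ.filter (fun j : Fin 2 => (j : ℕ) < 2)) = univ from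
        Finset.filter_true_of_mem (fun j _ => j.isLt), Fin.prod_univ_two] at h
    have e0 : (univ : Finset (Fin 2)).erase 0 = {1} := by decide
    have e1 : (univ : Finset (Fin 2)).erase 1 = {0} := by decide
    simp only [Fin.prod_univ_two, Fin.sum_univ_two, e0, e1, Finset.prod_singleton]
    exact fay (t 0) (t 1) (μ 0) (μ 1) (ht0 0) (ht0 1) (ht1 0) (ht1 1) (hμ1 0) (hμ1 1)
      (htij 0 1 (by decide)) hμμ
  | succ n hn ih =>
    intro t μ ht0 hμ0 ht1 hμ1 htij hpre
    set T := t (Fin.last n) with hT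
    set M := μ (Fin.last n) with hM
    set t' : Fin n → ℂ := fun i => t (Fin.castSucc i) with ht'
    set μ' : Fin n → ℂ := fun i => μ (Fin.castSucc i) with hμ'
    set P : ℂ := ∏ i, μ' i with hPdef
    have hP : P ≠ 1 := by
      have h := hpre n (by omega) (by omega)
      rwa [filter_lt_castSucc n n le_rfl μ,
        show (univ.filter (fun j : Fin n => (j : ℕ) < n)) = univ from
          Finset.filter_true_of_mem (fun j _ => j.isLt)] at h
    have hPM : P * M ≠ 1 := by
      have h := hpre (n + 1) (by omega) le_rfl
      rwa [show (univ.filter (fun j : Fin (n + 1) => (j : ℕ) < n + 1)) = univ from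
          Finset.filter_true_of_mem (fun j _ => j.isLt), Fin.prod_univ_castSucc] at h
    have hpre' : ∀ k, 2 ≤ k → k ≤ n →
        ∏ j ∈ univ.filter (fun j : Fin n => (j : ℕ) < k), μ' j ≠ 1 := by
      intro k hk2 hkn
      have h := hpre k hk2 (by omega)
      rwa [filter_lt_castSucc n k hkn μ] at h
    have ht0' : ∀ i, t' i ≠ 0 := fun i => ht0 _
    have hμ0' : ∀ i, μ' i ≠ 0 := fun i => hμ0 _
    have ht1' : ∀ i, t' i ≠ 1 := fun i => ht1 _
    have hμ1' : ∀ i, μ' i ≠ 1 := fun i => hμ1 _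
    have htij' : ∀ i j, i ≠ j → t' i ≠ t' j := fun i j hij =>
      htij _ _ (fun h => hij (Fin.castSucc_injective n h))
    have htiT : ∀ i : Fin n, t' i ≠ T := fun i =>
      htij _ _ (Fin.castSucc_lt_last i).ne
    have hT0 : T ≠ 0 := ht0 _
    have hT1 : T ≠ 1 := ht1 _
    have hM1 : M ≠ 1 := hμ1 _
    set s : Fin n → ℂ := fun i => t' i / T with hs
    have hs0 : ∀ i, s i ≠ 0 := fun i => div_ne_zero (ht0' i) hT0
    have hs1 : ∀ i, s i ≠ 1 := fun i => by
      simp only [hs]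
      rw [Ne, div_eq_one_iff_eq hT0]
      exact htiT i
    have hsij : ∀ i j, i ≠ j → s i ≠ s j := fun i j hij h => by
      simp only [hs] at h
      exact htij' i j hij (by
        have := (div_eq_div_iff hT0 hT0).mp h
        exact mul_right_cancel₀ hT0 this)
    have hss : ∀ j i : Fin n, s j / s i = t' j / t' i := fun j i =>
      div_div_div_cancel_right₀ hT0 _ _
    have IH1 := ih t' μ' ht0' hμ0' ht1' hμ1' htij' hpre'
    have IH2 := ih s μ' hs0 hμ0' hs1 hμ1' hsij hpre'
    simp only [hss] at IH2
    rw [Fin.sum_univ_castSucc]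
    calc ∏ i, delta0 (t i) (μ i)
        = (∏ i, delta0 (t' i) (μ' i)) * delta0 T M := by
          rw [Fin.prod_univ_castSucc]
      _ = (∑ i, delta0 (t' i) P * ∏ j ∈ univ.erase i, delta0 (t' j / t' i) (μ' j)) *
            delta0 T M := by rw [IH1]
      _ = ∑ i, (delta0 (t' i) P * delta0 T M) *
            ∏ j ∈ univ.erase i, delta0 (t' j / t' i) (μ' j) := by
          rw [Finset.sum_mul]
          exact Finset.sum_congr rfl fun i _ => by ring
      _ = ∑ i, (delta0 (t' i) (P * M) * delta0 (T / t' i) M +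
            delta0 T (P * M) * delta0 (t' i / T) P) *
            ∏ j ∈ univ.erase i, delta0 (t' j / t' i) (μ' j) := by
          refine Finset.sum_congr rfl fun i _ => ?_
          rw [fay (t' i) T P M (ht0' i) hT0 (ht1' i) hT1 hP hM1 (htiT i) hPM]
      _ = (∑ i, delta0 (t' i) (P * M) *
            (delta0 (T / t' i) M * ∏ j ∈ univ.erase i, delta0 (t' j / t' i) (μ' j))) +
            delta0 T (P * M) *
            ∑ i, delta0 (s i) P * ∏ j ∈ univ.erase i, delta0 (t' j / t' i) (μ' j) := by
          rw [Finset.mul_sum, ← Finset.sum_add_distrib]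
          refine Finset.sum_congr rfl fun i _ => ?_
          simp only [hs]
          ring
      _ = (∑ i, delta0 (t' i) (P * M) *
            (delta0 (T / t' i) M * ∏ j ∈ univ.erase i, delta0 (t' j / t' i) (μ' j))) +
            delta0 T (P * M) * ∏ i, delta0 (s i) (μ' i) := by rw [IH2]
      _ = (∑ i, delta0 (t (Fin.castSucc i)) (∏ j, μ j) *
            ∏ j ∈ univ.erase (Fin.castSucc i), delta0 (t j / t (Fin.castSucc i)) (μ j)) +
            delta0 T (∏ j, μ j) *
            ∏ j ∈ univ.erase (Fin.last n), delta0 (t j / T) (μ j) := by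
          rw [show (∏ j, μ j) = P * M by rw [hPdef, hM, Fin.prod_univ_castSucc]]
          congr 1
          · refine Finset.sum_congr rfl fun i _ => ?_
            rw [prod_erase_castSucc n (fun j => delta0 (t j / t (Fin.castSucc i)) (μ j)) i]
          · rw [erase_last, Finset.prod_map]
            exact congrArg _ (Finset.prod_congr rfl fun i _ => rfl)

lemma finite_root (c : ℂ) (hc : c ≠ 0) (m : ℕ) (hm : 0 < m) :
    {z : ℂ | c * z ^ m = 1}.Finite := by
  apply Set.Finite.subset (Polynomial.nthRoots m (c⁻¹ : ℂ)).toFinset.finite_toSet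
  intro z hz
  simp only [Set.mem_setOf_eq] at hz
  simp only [Multiset.mem_coe, Multiset.mem_toFinset, Finset.mem_coe,
    Polynomial.mem_nthRoots hm]
  exact eq_inv_of_mul_eq_one_right hz

lemma ev_notin (S : Set ℂ) (hS : S.Finite) : ∀ᶠ z in 𝓝[≠] (1 : ℂ), z ∉ S := by
  have h1 : IsOpen ((S \ {1} : Set ℂ)ᶜ) :=
    ((hS.subset Set.diff_subset).isClosed).isOpen_compl
  have h2 : (1 : ℂ) ∈ (S \ {1} : Set ℂ)ᶜ := by simp
  have h3 : ∀ᶠ z in 𝓝 (1 : ℂ), z ∈ (S \ {1} : Set ℂ)ᶜ :=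
    eventually_of_mem (h1.mem_nhds h2) (fun _ h => h)
  have h4 : ∀ᶠ z in 𝓝[≠] (1 : ℂ), z ∈ (S \ {1} : Set ℂ)ᶜ :=
    h3.filter_mono nhdsWithin_le_nhds
  have h5 : ∀ᶠ z in 𝓝[≠] (1 : ℂ), z ≠ 1 := eventually_mem_nhdsWithin
  filter_upwards [h4, h5] with z hz hz1 hzS
  exact hz ⟨hzS, hz1⟩

theorem stmt17 (n : ℕ) (hn : 2 ≤ n) (t μ : Fin n → ℂ)
    (ht0 : ∀ i, t i ≠ 0) (hμ0 : ∀ i, μ i ≠ 0)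
    (ht1 : ∀ i, t i ≠ 1) (hμ1 : ∀ i, μ i ≠ 1)
    (htij : ∀ i j, i ≠ j → t i ≠ t j) (hprod : ∏ j, μ j ≠ 1) :
    ∏ i, delta0 (t i) (μ i) =
      ∑ i, delta0 (t i) (∏ j, μ j) * ∏ j ∈ Finset.univ.erase i, delta0 (t j / t i) (μ j) := by
  classical
  set l : Filter ℂ := 𝓝[≠] (1 : ℂ) with hl
  have hz1 : Tendsto (fun z : ℂ => z) l (𝓝 1) := tendsto_id.mono_left nhdsWithin_le_nhds
  have hμz : ∀ i, Tendsto (fun z : ℂ => μ i * z) l (𝓝 (μ i)) := fun i => by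
    simpa using tendsto_const_nhds.mul hz1
  have hprodz : Tendsto (fun z : ℂ => ∏ j, (μ j * z)) l (𝓝 (∏ j, μ j)) :=
    tendsto_finset_prod _ (fun j _ => hμz j)
  have hdelta : ∀ (A : ℂ), A ≠ 1 → ∀ (g : ℂ → ℂ) (B : ℂ), B ≠ 1 → Tendsto g l (𝓝 B) →
      Tendsto (fun z => delta0 A (g z)) l (𝓝 (delta0 A B)) := by
    intro A hA g B hB hg
    have hd : (1 - A) * (1 - B) ≠ 0 :=
      mul_ne_zero (sub_ne_zero.mpr hA.symm) (sub_ne_zero.mpr hB.symm)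
    exact (tendsto_const_nhds.sub (tendsto_const_nhds.mul hg)).div
      (tendsto_const_nhds.mul (tendsto_const_nhds.sub hg)) hd
  have hF : Tendsto (fun z : ℂ => ∏ i, delta0 (t i) (μ i * z)) l
      (𝓝 (∏ i, delta0 (t i) (μ i))) :=
    tendsto_finset_prod _ (fun i _ => hdelta (t i) (ht1 i) _ (μ i) (hμ1 i) (hμz i))
  have hG : Tendsto (fun z : ℂ => ∑ i, delta0 (t i) (∏ j, (μ j * z)) *
      ∏ j ∈ Finset.univ.erase i, delta0 (t j / t i) (μ j * z)) l
      (𝓝 (∑ i, delta0 (t i) (∏ j, μ j) *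
        ∏ j ∈ Finset.univ.erase i, delta0 (t j / t i) (μ j))) := by
    apply tendsto_finset_sum
    intro i _
    refine (hdelta (t i) (ht1 i) _ _ hprod hprodz).mul (tendsto_finset_prod _ ?_)
    intro j hj
    have hji : t j / t i ≠ 1 := by
      rw [Ne, div_eq_one_iff_eq (ht0 i)]
      exact htij j i (Finset.mem_erase.mp hj).1
    exact hdelta _ hji _ _ (hμ1 j) (hμz j)
  have hEq : (fun z : ℂ => ∏ i, delta0 (t i) (μ i * z)) =ᶠ[l]
      (fun z : ℂ => ∑ i, delta0 (t i) (∏ j, (μ j * z)) *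
        ∏ j ∈ Finset.univ.erase i, delta0 (t j / t i) (μ j * z)) := by
    have e0 : ∀ᶠ z in l, z ∉ ({0} : Set ℂ) := ev_notin _ (Set.finite_singleton 0)
    have e1 : ∀ᶠ z in l, ∀ i, μ i * z ≠ 1 := by
      refine eventually_all.mpr fun i => ?_
      filter_upwards [ev_notin _ (finite_root (μ i) (hμ0 i) 1 one_pos)] with z hz h
      exact hz (by simpa using h)
    have e2 : ∀ᶠ z in l, ∀ k ∈ Finset.Icc 2 n,
        (∏ j ∈ univ.filter (fun j : Fin n => (j : ℕ) < k), μ j) *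
          z ^ (univ.filter (fun j : Fin n => (j : ℕ) < k)).card ≠ 1 := by
      refine (eventually_all_finset _).mpr fun k hk => ?_
      obtain ⟨hk2, hkn⟩ := Finset.mem_Icc.mp hk
      have hc : (∏ j ∈ univ.filter (fun j : Fin n => (j : ℕ) < k), μ j) ≠ 0 :=
        Finset.prod_ne_zero_iff.mpr (fun j _ => hμ0 j)
      have hcard : 0 < (univ.filter (fun j : Fin n => (j : ℕ) < k)).card := by
        refine Finset.card_pos.mpr ⟨⟨0, by omega⟩, ?_⟩
        simp only [Finset.mem_filter, Finset.mem_univ, true_and]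
        omega
      filter_upwards [ev_notin _ (finite_root _ hc _ hcard)] with z hz
      exact hz
    filter_upwards [e0, e1, e2] with z hz0 hz1' hz2
    refine aux n hn t (fun i => μ i * z) ht0
      (fun i => mul_ne_zero (hμ0 i) (by simpa using hz0)) ht1 hz1' htij ?_
    intro k hk2 hkn
    rw [Finset.prod_mul_distrib, Finset.prod_const]
    exact hz2 k (Finset.mem_Icc.mpr ⟨hk2, hkn⟩)
  exact tendsto_nhds_unique hF (hG.congr' hEq.symm)
end
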